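/- arXiv:2510.10056 — 2 statements merged into one kernel-verified Lean document; each statement's English description precedes it below -/
import Mathlib

section
/- Assume 𝒜𝒜* is invertible, let γ > 0, and let (Xᵏ, yᵏ, Sᵏ) be generated by the exact classical ADMM iteration. For k ≥ 1 define Zᵏ = X^{k−1} + (1/γ)(𝒜*(yᵏ) − C), let P(Z) = Z − C/γ − 𝒜*((𝒜𝒜*)⁻¹(𝒜(Z − C/γ) − b)), and define the Douglas–Rachford operator T(Z) = Z + P(2·Proj_{𝕊₊ⁿ}(Z) − Z) − Proj_{𝕊₊ⁿ}(Z). Then for every k ≥ 1: Xᵏ = Proj_{𝕊₊ⁿ}(Zᵏ), Sᵏ = Proj_{𝕊₊ⁿ}(−γZᵏ), and Z^{k+1} = T(Zᵏ). -/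
open Matrix

namespace QADMM

variable {n m : ℕ}

/-- Trace inner product `⟨A,B⟩ = Tr(AᵀB)`. -/
noncomputable def minner (A B : Matrix (Fin n) (Fin n) ℝ) : ℝ :=
  Matrix.trace (Aᵀ * B)

/-- Frobenius norm `‖X‖_F = √(Tr(Xᵀ X))`. -/
noncomputable def frob (X : Matrix (Fin n) (Fin n) ℝ) : ℝ :=
  Real.sqrt (Matrix.trace (Xᵀ * X))

/-- The linear map `𝒜(X) = (⟨A⁽¹⁾,X⟩, …, ⟨A⁽ᵐ⁾,X⟩)`. -/
noncomputable def Amap (A : Fin m → Matrix (Fin n) (Fin n) ℝ)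
    (X : Matrix (Fin n) (Fin n) ℝ) : Fin m → ℝ :=
  fun i => minner (A i) X

/-- The adjoint map `𝒜*(y) = Σᵢ yᵢ A⁽ⁱ⁾`. -/
noncomputable def Aadj (A : Fin m → Matrix (Fin n) (Fin n) ℝ)
    (y : Fin m → ℝ) : Matrix (Fin n) (Fin n) ℝ :=
  ∑ i, y i • A i

/-- The `m×m` matrix `𝒜𝒜*` with entries `⟨A⁽ⁱ⁾, A⁽ʲ⁾⟩`. -/
noncomputable def AAt (A : Fin m → Matrix (Fin n) (Fin n) ℝ) : Matrix (Fin m) (Fin m) ℝ :=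
  Matrix.of fun i j => minner (A i) (A j)

/-- `proj` is the Frobenius-metric projection onto the PSD cone: `proj Z` is positive
semidefinite and is a nearest PSD matrix to `Z` in Frobenius norm. -/
def IsProjPSD (proj : Matrix (Fin n) (Fin n) ℝ → Matrix (Fin n) (Fin n) ℝ) : Prop :=
  ∀ Z : Matrix (Fin n) (Fin n) ℝ,
    (proj Z).PosSemidef ∧
    ∀ W : Matrix (Fin n) (Fin n) ℝ, W.PosSemidef → frob (Z - proj Z) ≤ frob (Z - W)

/-- `(X*, y*, S*)` satisfies the SDP optimality conditions: primal feasibility, dual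
feasibility, and complementary slackness. -/
def OptCond (A : Fin m → Matrix (Fin n) (Fin n) ℝ) (C : Matrix (Fin n) (Fin n) ℝ)
    (b : Fin m → ℝ) (Xs : Matrix (Fin n) (Fin n) ℝ) (ys : Fin m → ℝ)
    (Ss : Matrix (Fin n) (Fin n) ℝ) : Prop :=
  Amap A Xs = b ∧ Xs.PosSemidef ∧ Aadj A ys + Ss = C ∧ Ss.PosSemidef ∧ Xs * Ss = 0

/-- The exact classical ADMM iteration for the dual SDP, with parameter `γ > 0`:
`y^{k+1} = −(𝒜𝒜*)⁻¹(γ(𝒜(Xᵏ) − b) + 𝒜(Sᵏ − C))`,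
`S^{k+1} = Proj_{𝕊₊ⁿ}(C − 𝒜*(y^{k+1}) − γXᵏ)`,
`X^{k+1} = Xᵏ + (1/γ)(𝒜*(y^{k+1}) + S^{k+1} − C)`. -/
def ADMMSeq (A : Fin m → Matrix (Fin n) (Fin n) ℝ) (C : Matrix (Fin n) (Fin n) ℝ)
    (b : Fin m → ℝ) (projPSD : Matrix (Fin n) (Fin n) ℝ → Matrix (Fin n) (Fin n) ℝ)
    (γ : ℝ) (X : ℕ → Matrix (Fin n) (Fin n) ℝ) (y : ℕ → Fin m → ℝ)
    (S : ℕ → Matrix (Fin n) (Fin n) ℝ) : Prop :=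
  ∀ k : ℕ,
    y (k + 1) = -((AAt A)⁻¹.mulVec (γ • (Amap A (X k) - b) + Amap A (S k - C))) ∧
    S (k + 1) = projPSD (C - Aadj A (y (k + 1)) - γ • X k) ∧
    X (k + 1) = X k + γ⁻¹ • (Aadj A (y (k + 1)) + S (k + 1) - C)

end QADMM

namespace QADMM

variable {n m : ℕ}

lemma minner_eq_sum (A B : Matrix (Fin n) (Fin n) ℝ) :
    minner A B = ∑ k, ∑ i, A i k * B i k := by
  simp [minner, Matrix.trace, Matrix.diag, Matrix.mul_apply]

lemma minner_comm (A B : Matrix (Fin n) (Fin n) ℝ) : minner A B = minner B A := by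
  simp [minner_eq_sum, mul_comm]

lemma minner_add_right (A B C : Matrix (Fin n) (Fin n) ℝ) :
    minner A (B + C) = minner A B + minner A C := by
  simp [minner_eq_sum, Matrix.add_apply, mul_add, Finset.sum_add_distrib]

lemma minner_sub_right (A B C : Matrix (Fin n) (Fin n) ℝ) :
    minner A (B - C) = minner A B - minner A C := by
  simp [minner_eq_sum, Matrix.sub_apply, mul_sub, Finset.sum_sub_distrib]

lemma minner_smul_right (c : ℝ) (A B : Matrix (Fin n) (Fin n) ℝ) :
    minner A (c • B) = c * minner A B := by
  simp [minner_eq_sum, Matrix.smul_apply, Finset.mul_sum, smul_eq_mul]; ring_nf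
  simp [mul_comm, mul_left_comm]

lemma minner_neg_right (A B : Matrix (Fin n) (Fin n) ℝ) :
    minner A (-B) = -minner A B := by
  simp [minner_eq_sum]


lemma minner_smul_left (c : ℝ) (A B : Matrix (Fin n) (Fin n) ℝ) :
    minner (c • A) B = c * minner A B := by
  rw [minner_comm, minner_smul_right, minner_comm]

lemma minner_neg_left (A B : Matrix (Fin n) (Fin n) ℝ) :
    minner (-A) B = -minner A B := by
  rw [minner_comm, minner_neg_right, minner_comm]

lemma minner_add_left (A B C : Matrix (Fin n) (Fin n) ℝ) :
    minner (A + B) C = minner A C + minner B C := by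
  rw [minner_comm, minner_add_right, minner_comm, minner_comm C B]

lemma minner_self_nonneg (A : Matrix (Fin n) (Fin n) ℝ) : 0 ≤ minner A A := by
  rw [minner_eq_sum]
  exact Finset.sum_nonneg fun k _ => Finset.sum_nonneg fun i _ => mul_self_nonneg _

lemma minner_self_eq_zero {A : Matrix (Fin n) (Fin n) ℝ} (h : minner A A = 0) : A = 0 := by
  rw [minner_eq_sum] at h
  ext i k
  have h1 : ∀ k ∈ Finset.univ, (0:ℝ) ≤ ∑ i, A i k * A i k :=
    fun k _ => Finset.sum_nonneg fun i _ => mul_self_nonneg _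
  have h2 := (Finset.sum_eq_zero_iff_of_nonneg h1).mp h k (Finset.mem_univ k)
  have h3 := (Finset.sum_eq_zero_iff_of_nonneg
    (fun i _ => mul_self_nonneg (A i k))).mp h2 i (Finset.mem_univ i)
  simpa [mul_self_eq_zero] using h3

lemma frob_eq_sqrt (X : Matrix (Fin n) (Fin n) ℝ) : frob X = Real.sqrt (minner X X) := rfl

lemma minner_le_of_frob_le {A B : Matrix (Fin n) (Fin n) ℝ} (h : frob A ≤ frob B) :
    minner A A ≤ minner B B := by
  rw [frob_eq_sqrt, frob_eq_sqrt] at h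
  exact (Real.sqrt_le_sqrt_iff (minner_self_nonneg B)).mp h


variable {n m : ℕ}

lemma conjT_eq (M : Matrix (Fin n) (Fin n) ℝ) : Mᴴ = Mᵀ := by
  ext i j; simp [Matrix.conjTranspose_apply]

lemma psd_isSymm {M : Matrix (Fin n) (Fin n) ℝ} (h : M.PosSemidef) : M.IsSymm := by
  have := h.1
  rwa [Matrix.IsHermitian, conjT_eq] at this

lemma psd_smul {M : Matrix (Fin n) (Fin n) ℝ} {c : ℝ} (hc : 0 ≤ c) (h : M.PosSemidef) :
    (c • M).PosSemidef := by
  refine Matrix.PosSemidef.of_dotProduct_mulVec_nonneg ?_ fun x => ?_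
  · rw [Matrix.IsHermitian, conjT_eq, Matrix.transpose_smul, (psd_isSymm h)]
  · rw [Matrix.smul_mulVec, dotProduct_smul]
    exact mul_nonneg hc (h.dotProduct_mulVec_nonneg x)

/-- Self-duality (easy direction): trace inner product of two PSD matrices is nonneg. -/
lemma minner_nonneg_of_psd {U V : Matrix (Fin n) (Fin n) ℝ}
    (hU : U.PosSemidef) (hV : V.PosSemidef) : 0 ≤ minner U V := by
  obtain ⟨B, hB⟩ : ∃ B : Matrix (Fin n) (Fin n) ℝ, U = Bᴴ * B := by
    open scoped MatrixOrder Matrix.Norms.L2Operator in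
    exact (CStarAlgebra.nonneg_iff_eq_star_mul_self.mp hU.nonneg).imp fun B hB => hB
  have hsym : Uᵀ = U := psd_isSymm hU
  have : minner U V = Matrix.trace (B * V * Bᴴ) := by
    rw [minner, hsym, hB]
    rw [Matrix.mul_assoc, Matrix.trace_mul_comm, Matrix.mul_assoc]
  rw [this]
  have hpsd : (B * V * Bᴴ).PosSemidef := hV.mul_mul_conjTranspose_same B
  rw [Matrix.trace]
  refine Finset.sum_nonneg fun i _ => ?_
  have := hpsd.dotProduct_mulVec_nonneg (Pi.single i 1)
  simpa [Matrix.diag, Matrix.mulVec_single, dotProduct, Pi.single_apply] using this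

lemma psd_vecMulVec (v : Fin n → ℝ) : (Matrix.vecMulVec v v).PosSemidef := by
  refine Matrix.PosSemidef.of_dotProduct_mulVec_nonneg ?_ fun x => ?_
  · rw [Matrix.IsHermitian, conjT_eq]
    ext i j; simp [Matrix.vecMulVec_apply, mul_comm]
  · have h1 : Matrix.vecMulVec v v *ᵥ x = (v ⬝ᵥ x) • v := by
      ext i
      simp only [Matrix.mulVec, Matrix.vecMulVec_apply, dotProduct, Pi.smul_apply,
        smul_eq_mul, Finset.sum_mul, Finset.mul_sum]
      exact Finset.sum_congr rfl fun j _ => by ring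
    rw [h1]
    have : star x ⬝ᵥ (v ⬝ᵥ x) • v = (v ⬝ᵥ x) * (x ⬝ᵥ v) := by
      simp [dotProduct_smul, dotProduct, Finset.mul_sum, mul_comm, mul_left_comm]
    rw [this, dotProduct_comm]
    exact mul_self_nonneg _

lemma minner_vecMulVec (M : Matrix (Fin n) (Fin n) ℝ) (v : Fin n → ℝ) :
    minner M (Matrix.vecMulVec v v) = v ⬝ᵥ M *ᵥ v := by
  rw [minner_eq_sum]
  simp only [Matrix.vecMulVec_apply, dotProduct, Matrix.mulVec, Finset.mul_sum]
  rw [Finset.sum_comm]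
  congr 1; ext i; congr 1; ext k; ring

/-- Self-duality (hard direction). -/
lemma psd_of_minner_nonneg {M : Matrix (Fin n) (Fin n) ℝ} (hsym : M.IsSymm)
    (h : ∀ V : Matrix (Fin n) (Fin n) ℝ, V.PosSemidef → 0 ≤ minner M V) :
    M.PosSemidef := by
  refine Matrix.PosSemidef.of_dotProduct_mulVec_nonneg (by rw [Matrix.IsHermitian, conjT_eq]; exact hsym) fun x => ?_
  have := h _ (psd_vecMulVec x)
  rw [minner_vecMulVec] at this
  simpa using this


lemma minner_expand (a b : Matrix (Fin n) (Fin n) ℝ) :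
    minner (a + b) (a + b) = minner a a + 2 * minner a b + minner b b := by
  rw [minner_add_right, minner_add_left, minner_add_left, minner_comm b a]
  ring

/-- Variational inequality for the projection. -/
lemma proj_vi {proj : Matrix (Fin n) (Fin n) ℝ → Matrix (Fin n) (Fin n) ℝ}
    (hproj : IsProjPSD proj) (Y : Matrix (Fin n) (Fin n) ℝ)
    {V : Matrix (Fin n) (Fin n) ℝ} (hV : V.PosSemidef) :
    minner (Y - proj Y) (V - proj Y) ≤ 0 := by
  set U := proj Y with hU
  set d := Y - U with hd
  set e := V - U with he
  set c := minner d e with hc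
  set q := minner e e with hq
  have hq0 : 0 ≤ q := minner_self_nonneg e
  have key : ∀ t : ℝ, 0 < t → t ≤ 1 → c ≤ t / 2 * q := by
    intro t ht0 ht1
    have hWt : ((1 - t) • U + t • V).PosSemidef :=
      Matrix.PosSemidef.add (psd_smul (by linarith) (hproj Y).1) (psd_smul ht0.le hV)
    have hfrob := (hproj Y).2 _ hWt
    have hm := minner_le_of_frob_le hfrob
    have hrw : Y - ((1 - t) • U + t • V) = d + (-t) • e := by
      rw [hd, he]; match_scalars <;> ring
    rw [hrw, minner_expand] at hm
    simp only [minner_smul_right, minner_smul_left] at hm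
    nlinarith [hm]
  by_contra hcon
  push_neg at hcon
  have hc0 : 0 < c := hcon
  have htpos : 0 < min 1 (c / (q + 1)) :=
    lt_min one_pos (div_pos hc0 (by linarith))
  have h1 := key _ htpos (min_le_left _ _)
  have h2 : min 1 (c / (q + 1)) * (q + 1) ≤ c := by
    rw [← le_div_iff₀ (by linarith : (0:ℝ) < q + 1)]
    exact min_le_right _ _
  nlinarith [htpos, h1, h2, hq0]

/-- Moreau decomposition for the PSD cone, for an abstract nearest-point projection. -/
lemma moreau {proj : Matrix (Fin n) (Fin n) ℝ → Matrix (Fin n) (Fin n) ℝ}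
    (hproj : IsProjPSD proj) {γ : ℝ} (hγ : 0 < γ)
    {Z : Matrix (Fin n) (Fin n) ℝ} (hZ : Z.IsSymm) :
    Z + γ⁻¹ • proj (-(γ • Z)) = proj Z := by
  have hγ0 : γ ≠ 0 := ne_of_gt hγ
  set Y := -(γ • Z) with hY
  set U := proj Y with hU
  have hUpsd : U.PosSemidef := (hproj Y).1
  -- orthogonality: ⟨Y - U, U⟩ = 0
  have horth : minner (Y - U) U = 0 := by
    have h1 := proj_vi hproj Y Matrix.PosSemidef.zero
    have h2 := proj_vi hproj Y (Matrix.PosSemidef.add hUpsd hUpsd)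
    rw [zero_sub, minner_neg_right] at h1
    rw [add_sub_cancel_right] at h2
    linarith
  -- dual cone condition
  have hdual : ∀ V : Matrix (Fin n) (Fin n) ℝ, V.PosSemidef → 0 ≤ minner (U - Y) V := by
    intro V hV
    have h := proj_vi hproj Y hV
    rw [minner_sub_right, horth] at h
    have he : U - Y = -(Y - U) := by abel
    rw [he, minner_neg_left]
    linarith
  have hUY : U - Y = γ • Z + U := by rw [hY]; abel
  set M := γ • Z + U with hM
  have hMsym : M.IsSymm := by
    rw [Matrix.IsSymm, hM, Matrix.transpose_add, Matrix.transpose_smul, hZ, psd_isSymm hUpsd]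
  have hMpsd : M.PosSemidef := psd_of_minner_nonneg hMsym (fun V hV => by
    have := hdual V hV; rwa [hUY] at this)
  set W := Z + γ⁻¹ • U with hW
  have hWM : W = γ⁻¹ • M := by
    rw [hW, hM, smul_add, smul_smul, inv_mul_cancel₀ hγ0, one_smul]
  have hWpsd : W.PosSemidef := hWM ▸ psd_smul (by positivity) hMpsd
  -- ⟨U, W⟩ = 0
  have hUW : minner U W = 0 := by
    have hUM : minner U M = 0 := by
      rw [← hUY, minner_comm, show U - Y = -(Y - U) by abel, minner_neg_left, horth, neg_zero]
    rw [hWM, minner_smul_right, hUM, mul_zero]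
  -- cross term nonneg
  have hcross : ∀ V : Matrix (Fin n) (Fin n) ℝ, V.PosSemidef →
      0 ≤ minner (Z - W) (W - V) := by
    intro V hV
    have h1 : Z - W = (-γ⁻¹) • U := by rw [hW]; match_scalars <;> ring
    rw [h1, minner_comm, minner_smul_right, minner_comm, minner_sub_right, hUW, zero_sub]
    have h2 : 0 ≤ minner U V := minner_nonneg_of_psd hUpsd hV
    have : (0:ℝ) < γ⁻¹ := by positivity
    nlinarith
  -- decomposition identity
  have hdecomp : ∀ V : Matrix (Fin n) (Fin n) ℝ,
      minner (Z - V) (Z - V)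
        = minner (Z - W) (Z - W) + 2 * minner (Z - W) (W - V) + minner (W - V) (W - V) := by
    intro V
    have h : Z - V = (Z - W) + (W - V) := by abel
    rw [h, minner_expand]
  -- conclude W = proj Z
  set P0 := proj Z with hP0
  have hle : minner (Z - P0) (Z - P0) ≤ minner (Z - W) (Z - W) :=
    minner_le_of_frob_le ((hproj Z).2 W hWpsd)
  have hid := hdecomp P0
  have hc := hcross P0 (hproj Z).1
  have hq := minner_self_nonneg (W - P0)
  have hzero : minner (W - P0) (W - P0) = 0 := by linarith
  have := minner_self_eq_zero hzero
  exact sub_eq_zero.mp this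
lemma Amap_smul (A : Fin m → Matrix (Fin n) (Fin n) ℝ) (c : ℝ) (X : Matrix (Fin n) (Fin n) ℝ) :
    Amap A (c • X) = c • Amap A X := by
  funext i; simp [Amap, minner_smul_right]

lemma Amap_add (A : Fin m → Matrix (Fin n) (Fin n) ℝ) (X Y : Matrix (Fin n) (Fin n) ℝ) :
    Amap A (X + Y) = Amap A X + Amap A Y := by
  funext i; simp [Amap, minner_add_right]

lemma Aadj_smul (A : Fin m → Matrix (Fin n) (Fin n) ℝ) (c : ℝ) (v : Fin m → ℝ) :
    Aadj A (c • v) = c • Aadj A v := by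
  simp [Aadj, Finset.smul_sum, smul_smul]

lemma Aadj_neg (A : Fin m → Matrix (Fin n) (Fin n) ℝ) (v : Fin m → ℝ) :
    Aadj A (-v) = -Aadj A v := by
  simp [Aadj, neg_smul, Finset.sum_neg_distrib]

lemma Aadj_isSymm {A : Fin m → Matrix (Fin n) (Fin n) ℝ} (hA : ∀ i, (A i).IsSymm)
    (v : Fin m → ℝ) : (Aadj A v).IsSymm := by
  rw [Matrix.IsSymm, Aadj, Matrix.transpose_sum]
  exact Finset.sum_congr rfl fun i _ => by rw [Matrix.transpose_smul, (hA i).eq]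




/-- ADMM as Douglas–Rachford splitting. With `Zᵏ = X^{k−1} + (1/γ)(𝒜*(yᵏ) − C)`,
`P(Z) = Z − C/γ − 𝒜*((𝒜𝒜*)⁻¹(𝒜(Z − C/γ) − b))` and
`T(Z) = Z + P(2 Proj_{𝕊₊ⁿ}(Z) − Z) − Proj_{𝕊₊ⁿ}(Z)`, one has for every `k ≥ 1`:
`Xᵏ = Proj_{𝕊₊ⁿ}(Zᵏ)`, `Sᵏ = Proj_{𝕊₊ⁿ}(−γZᵏ)` and `Z^{k+1} = T(Zᵏ)`. -/
theorem admm_is_douglas_rachford {n m : ℕ}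
    (A : Fin m → Matrix (Fin n) (Fin n) ℝ) (hA : ∀ i, (A i).IsSymm)
    (C : Matrix (Fin n) (Fin n) ℝ) (hC : C.IsSymm) (b : Fin m → ℝ)
    (hAAt : IsUnit (AAt A))
    (projPSD : Matrix (Fin n) (Fin n) ℝ → Matrix (Fin n) (Fin n) ℝ)
    (hproj : IsProjPSD projPSD)
    (γ : ℝ) (hγ : 0 < γ)
    (X : ℕ → Matrix (Fin n) (Fin n) ℝ) (y : ℕ → Fin m → ℝ)
    (S : ℕ → Matrix (Fin n) (Fin n) ℝ)
    (hX0 : (X 0).IsSymm) (hS0 : (S 0).IsSymm)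
    (hseq : ADMMSeq A C b projPSD γ X y S)
    (Z : ℕ → Matrix (Fin n) (Fin n) ℝ)
    (hZ : ∀ k : ℕ, 1 ≤ k → Z k = X (k - 1) + γ⁻¹ • (Aadj A (y k) - C))
    (P T : Matrix (Fin n) (Fin n) ℝ → Matrix (Fin n) (Fin n) ℝ)
    (hP : ∀ W, P W = W - γ⁻¹ • C - Aadj A ((AAt A)⁻¹.mulVec (Amap A (W - γ⁻¹ • C) - b)))
    (hT : ∀ W, T W = W + P (2 • projPSD W - W) - projPSD W) :
    ∀ k : ℕ, 1 ≤ k →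
      X k = projPSD (Z k) ∧
      S k = projPSD (-(γ • Z k)) ∧
      Z (k + 1) = T (Z k) := by

  have hγ0 : γ ≠ 0 := ne_of_gt hγ
  have hXsym : ∀ k, (X k).IsSymm := by
    intro k
    induction k with
    | zero => exact hX0
    | succ j ih =>
      have hSsym : (S (j+1)).IsSymm := by
        rw [(hseq j).2.1]; exact psd_isSymm (hproj _).1
      rw [(hseq j).2.2, Matrix.IsSymm, Matrix.transpose_add, Matrix.transpose_smul,
        Matrix.transpose_sub, Matrix.transpose_add, ih.eq, hSsym.eq, hC.eq,
        (Aadj_isSymm hA _).eq]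
  have hXZ : ∀ j : ℕ, X (j+1) = Z (j+1) + γ⁻¹ • S (j+1) := by
    intro j
    have h1 := hZ (j+1) (Nat.le_add_left 1 j)
    simp only [Nat.add_sub_cancel] at h1
    rw [(hseq j).2.2, h1]
    match_scalars <;> ring
  have hSZ : ∀ j : ℕ, S (j+1) = projPSD (-(γ • Z (j+1))) := by
    intro j
    have h1 := hZ (j+1) (Nat.le_add_left 1 j)
    simp only [Nat.add_sub_cancel] at h1
    rw [(hseq j).2.1, h1]
    exact congrArg projPSD (by match_scalars <;> field_simp)
  have hZsym : ∀ j : ℕ, (Z (j+1)).IsSymm := by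
    intro j
    have h1 := hZ (j+1) (Nat.le_add_left 1 j)
    simp only [Nat.add_sub_cancel] at h1
    rw [h1, Matrix.IsSymm, Matrix.transpose_add, Matrix.transpose_smul, Matrix.transpose_sub,
      (hXsym j).eq, hC.eq, (Aadj_isSymm hA _).eq]
  have hXP : ∀ j : ℕ, X (j+1) = projPSD (Z (j+1)) := by
    intro j
    rw [hXZ j, hSZ j, moreau hproj hγ (hZsym j)]
  intro k hk
  obtain ⟨j, rfl⟩ : ∃ j, k = j + 1 := ⟨k - 1, (Nat.succ_pred_eq_of_pos hk).symm⟩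
  refine ⟨hXP j, hSZ j, ?_⟩
  have h2 := hZ (j+1+1) (by omega)
  simp only [Nat.add_sub_cancel] at h2
  have hy2 := (hseq (j+1)).1
  have hS1 : S (j+1) = γ • (X (j+1) - Z (j+1)) := by
    rw [hXZ j]; match_scalars <;> field_simp <;> ring
  have hkey : γ • (Amap A ((2 • projPSD (Z (j+1)) - Z (j+1)) - γ⁻¹ • C) - b)
      = γ • (Amap A (X (j+1)) - b) + Amap A (S (j+1) - C) := by
    have hmat : γ • ((2 • projPSD (Z (j+1)) - Z (j+1)) - γ⁻¹ • C)
        = γ • X (j+1) + (S (j+1) - C) := by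
      rw [← hXP j, hS1]
      match_scalars <;> field_simp <;> ring
    calc γ • (Amap A ((2 • projPSD (Z (j+1)) - Z (j+1)) - γ⁻¹ • C) - b)
        = Amap A (γ • ((2 • projPSD (Z (j+1)) - Z (j+1)) - γ⁻¹ • C)) - γ • b := by
          rw [Amap_smul, smul_sub]
      _ = Amap A (γ • X (j+1) + (S (j+1) - C)) - γ • b := by rw [hmat]
      _ = γ • Amap A (X (j+1)) + Amap A (S (j+1) - C) - γ • b := by
          rw [Amap_add, Amap_smul]
      _ = γ • (Amap A (X (j+1)) - b) + Amap A (S (j+1) - C) := by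
          rw [smul_sub]; abel
  have hyv : y (j+1+1)
      = -(γ • (AAt A)⁻¹.mulVec (Amap A ((2 • projPSD (Z (j+1)) - Z (j+1)) - γ⁻¹ • C) - b)) := by
    rw [hy2, ← hkey, Matrix.mulVec_smul]
  rw [h2, hT, hP, hyv, Aadj_neg, Aadj_smul, ← hXP j]
  match_scalars <;> field_simp <;> ring

end QADMM
end

section
/- Let X ∈ 𝕊^n have an orthogonal eigendecomposition X = U diag(λ₁,…,λₙ) Uᵀ with U orthogonal. Then Y⁺ = U diag(max(λ₁,0),…,max(λₙ,0)) Uᵀ is the unique minimizer of ‖X − Y‖_F over the cone of positive semidefinite matrices, and Y⁻ = U diag(min(λ₁,0),…,min(λₙ,0)) Uᵀ is the unique minimizer of ‖X − Y‖_F over the cone of negative semidefinite matrices; moreover X = Y⁺ + Y⁻ and ⟨Y⁺, Y⁻⟩ = 0. -/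
open Matrix

namespace Stmt15

/-- Trace inner product `⟨A,B⟩ = Tr(AᵀB)`. -/
noncomputable def minner {n : ℕ} (A B : Matrix (Fin n) (Fin n) ℝ) : ℝ :=
  Matrix.trace (Aᵀ * B)

/-- Frobenius norm `‖X‖_F = √(Tr(Xᵀ X))`. -/
noncomputable def frob {n : ℕ} (X : Matrix (Fin n) (Fin n) ℝ) : ℝ :=
  Real.sqrt (Matrix.trace (Xᵀ * X))

private lemma trace_sq_nonneg {n : ℕ} (A : Matrix (Fin n) (Fin n) ℝ) :
    0 ≤ Matrix.trace (Aᵀ * A) := by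
  simp only [Matrix.trace, Matrix.diag, Matrix.mul_apply, Matrix.transpose_apply]
  exact Finset.sum_nonneg fun i _ => Finset.sum_nonneg fun j _ => mul_self_nonneg _

private lemma eq_zero_of_trace_sq {n : ℕ} (A : Matrix (Fin n) (Fin n) ℝ)
    (h : Matrix.trace (Aᵀ * A) = 0) : A = 0 := by
  have h' : ∑ i : Fin n, ∑ j : Fin n, A j i * A j i = 0 := by
    simpa [Matrix.trace, Matrix.diag, Matrix.mul_apply, Matrix.transpose_apply] using h
  have h1 := (Finset.sum_eq_zero_iff_of_nonneg (fun i _ =>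
    Finset.sum_nonneg fun j _ => mul_self_nonneg (A j i))).mp h'
  ext j i
  have h2 := (Finset.sum_eq_zero_iff_of_nonneg (fun j _ =>
    mul_self_nonneg (A j i))).mp (h1 i (Finset.mem_univ i)) j (Finset.mem_univ j)
  simpa using mul_self_eq_zero.mp h2

private lemma psd_trace_nonneg {n : ℕ} {A : Matrix (Fin n) (Fin n) ℝ}
    (hA : A.PosSemidef) : 0 ≤ Matrix.trace A := by
  refine Finset.sum_nonneg fun i _ => ?_
  exact hA.diag_nonneg

private lemma trace_psd_mul_nonneg {n : ℕ} {A B : Matrix (Fin n) (Fin n) ℝ}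
    (hA : A.PosSemidef) (hB : B.PosSemidef) : 0 ≤ Matrix.trace (A * B) := by
  obtain ⟨S, hSh, hSS⟩ : ∃ S : Matrix (Fin n) (Fin n) ℝ, Sᴴ = S ∧ S * S = A :=
    by
      open scoped MatrixOrder in
      exact ⟨CFC.sqrt A, (CFC.sqrt_nonneg A).isSelfAdjoint.star_eq, CFC.sqrt_mul_sqrt_self A hA.nonneg⟩
  have hP : (S * B * Sᴴ).PosSemidef := hB.mul_mul_conjTranspose_same S
  rw [hSh] at hP
  have : Matrix.trace (A * B) = Matrix.trace (S * B * S) := by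
    rw [← hSS, Matrix.mul_assoc, Matrix.trace_mul_comm, Matrix.mul_assoc]
  rw [this]
  exact psd_trace_nonneg hP

private lemma trace_expand {n : ℕ} (A B : Matrix (Fin n) (Fin n) ℝ) :
    Matrix.trace ((A + B)ᵀ * (A + B)) =
      Matrix.trace (Aᵀ * A) + Matrix.trace (Bᵀ * B) + 2 * Matrix.trace (Aᵀ * B) := by
  have h : Matrix.trace (Bᵀ * A) = Matrix.trace (Aᵀ * B) := by
    rw [← Matrix.trace_transpose (Bᵀ * A), Matrix.transpose_mul, Matrix.transpose_transpose]
  simp only [Matrix.transpose_add, Matrix.add_mul, Matrix.mul_add, Matrix.trace_add, h]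
  ring

private lemma frob_proj {n : ℕ} {X Y W : Matrix (Fin n) (Fin n) ℝ}
    (h : 0 ≤ Matrix.trace ((X - Y)ᵀ * (Y - W))) :
    frob (X - Y) ≤ frob (X - W) ∧ (frob (X - W) = frob (X - Y) → W = Y) := by
  have hXW : X - W = (X - Y) + (Y - W) := by abel
  have hexp := trace_expand (X - Y) (Y - W)
  rw [← hXW] at hexp
  have ha := trace_sq_nonneg (X - Y)
  have hb := trace_sq_nonneg (Y - W)
  have hc := trace_sq_nonneg (X - W)
  have hge : Matrix.trace ((X - Y)ᵀ * (X - Y)) ≤ Matrix.trace ((X - W)ᵀ * (X - W)) := by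
    rw [hexp]; linarith
  refine ⟨Real.sqrt_le_sqrt hge, fun heq => ?_⟩
  have heq' : Matrix.trace ((X - W)ᵀ * (X - W)) = Matrix.trace ((X - Y)ᵀ * (X - Y)) :=
    (Real.sqrt_inj hc ha).mp heq
  have hb0 : Matrix.trace ((Y - W)ᵀ * (Y - W)) = 0 := by linarith [hexp, heq']
  have := eq_zero_of_trace_sq _ hb0
  have : Y - W = 0 := this
  have := sub_eq_zero.mp this
  exact this.symm

/-- given an orthogonal eigendecomposition `X = U diag(λ) Uᵀ`,
`Y⁺ = U diag(max(λᵢ,0)) Uᵀ` is the unique nearest positive semidefinite matrix to `X` and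
`Y⁻ = U diag(min(λᵢ,0)) Uᵀ` is the unique nearest negative semidefinite matrix to `X` (in
Frobenius norm); moreover `X = Y⁺ + Y⁻` and `⟨Y⁺, Y⁻⟩ = 0`. -/
theorem projection_psd_nsd_decomposition {n : ℕ}
    (U : Matrix (Fin n) (Fin n) ℝ) (hU : U * Uᵀ = 1 ∧ Uᵀ * U = 1)
    (lam : Fin n → ℝ)
    (X : Matrix (Fin n) (Fin n) ℝ) (hX : X = U * Matrix.diagonal lam * Uᵀ)
    (Yp Ym : Matrix (Fin n) (Fin n) ℝ)
    (hYp : Yp = U * Matrix.diagonal (fun i => max (lam i) 0) * Uᵀ)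
    (hYm : Ym = U * Matrix.diagonal (fun i => min (lam i) 0) * Uᵀ) :
    (Yp.PosSemidef ∧
      (∀ W : Matrix (Fin n) (Fin n) ℝ, W.PosSemidef → frob (X - Yp) ≤ frob (X - W)) ∧
      (∀ W : Matrix (Fin n) (Fin n) ℝ, W.PosSemidef →
        frob (X - W) = frob (X - Yp) → W = Yp)) ∧
    ((-Ym).PosSemidef ∧
      (∀ W : Matrix (Fin n) (Fin n) ℝ, (-W).PosSemidef → frob (X - Ym) ≤ frob (X - W)) ∧
      (∀ W : Matrix (Fin n) (Fin n) ℝ, (-W).PosSemidef →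
        frob (X - W) = frob (X - Ym) → W = Ym)) ∧
    X = Yp + Ym ∧ minner Yp Ym = 0 := by
  have hUH : Uᴴ = Uᵀ := by ext i j; simp [Matrix.conjTranspose_apply]
  -- PSD of Yp
  have hDp : (Matrix.diagonal (fun i => max (lam i) 0)).PosSemidef :=
    Matrix.posSemidef_diagonal_iff.mpr fun i => le_max_right _ _
  have hYpPSD : Yp.PosSemidef := by
    rw [hYp, ← hUH]; exact hDp.mul_mul_conjTranspose_same U
  -- PSD of -Ym
  have hdneg : (Matrix.diagonal fun i => -(min (lam i) 0)) =
      -(Matrix.diagonal fun i => min (lam i) 0) := by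
    ext i j; by_cases h : i = j <;> simp [Matrix.diagonal, h]
  have hNegYm : (-Ym) = U * Matrix.diagonal (fun i => -(min (lam i) 0)) * Uᵀ := by
    rw [hYm, hdneg, Matrix.mul_neg, Matrix.neg_mul]
  have hDm : (Matrix.diagonal (fun i => -(min (lam i) 0))).PosSemidef :=
    Matrix.posSemidef_diagonal_iff.mpr fun i => by simp [min_le_iff]
  have hYmPSD : (-Ym).PosSemidef := by
    rw [hNegYm, ← hUH]; exact hDm.mul_mul_conjTranspose_same U
  -- X = Yp + Ym
  have hdadd : (Matrix.diagonal fun i => max (lam i) 0) + (Matrix.diagonal fun i => min (lam i) 0)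
      = Matrix.diagonal lam := by
    ext i j; by_cases h : i = j <;> simp [Matrix.diagonal, h, max_add_min]
  have hsum : X = Yp + Ym := by
    rw [hX, hYp, hYm, ← Matrix.add_mul, ← Matrix.mul_add, hdadd]
  -- Yp * Ym = 0 and Ym * Yp = 0
  have hdiagmul : ∀ i : Fin n, min (lam i) 0 * max (lam i) 0 = 0 := by
    intro i
    rcases le_total (lam i) 0 with h | h
    · simp [max_eq_right h]
    · simp [min_eq_right h]
  have key : ∀ d e : Fin n → ℝ, (∀ i, d i * e i = 0) →
      (U * Matrix.diagonal d * Uᵀ) * (U * Matrix.diagonal e * Uᵀ) = 0 := by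
    intro d e h
    have hde : Matrix.diagonal d * Matrix.diagonal e = 0 := by
      rw [Matrix.diagonal_mul_diagonal]
      ext i j; by_cases hij : i = j <;> simp [Matrix.diagonal, hij, h]
    simp only [Matrix.mul_assoc]
    rw [← Matrix.mul_assoc Uᵀ U, hU.2, Matrix.one_mul,
      ← Matrix.mul_assoc (Matrix.diagonal d), hde, Matrix.zero_mul, Matrix.mul_zero]
  have hYmYp : Ym * Yp = 0 := by
    rw [hYm, hYp]; exact key _ _ hdiagmul
  have hYpYm : Yp * Ym = 0 := by
    rw [hYp, hYm]; exact key _ _ fun i => by rw [mul_comm]; exact hdiagmul i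
  -- symmetry
  have hYpT : Ypᵀ = Yp := by
    rw [hYp]
    simp [Matrix.transpose_mul, Matrix.diagonal_transpose, Matrix.mul_assoc]
  have hYmT : Ymᵀ = Ym := by
    rw [hYm]
    simp [Matrix.transpose_mul, Matrix.diagonal_transpose, Matrix.mul_assoc]
  -- X - Yp = Ym, X - Ym = Yp
  have hXYp : X - Yp = Ym := by rw [hsum]; abel
  have hXYm : X - Ym = Yp := by rw [hsum]; abel
  refine ⟨⟨hYpPSD, ?_, ?_⟩, ⟨hYmPSD, ?_, ?_⟩, hsum, ?_⟩
  · intro W hW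
    have hcross : 0 ≤ Matrix.trace ((X - Yp)ᵀ * (Yp - W)) := by
      rw [hXYp, hYmT, Matrix.mul_sub, Matrix.trace_sub, hYmYp, Matrix.trace_zero]
      have : Matrix.trace (Ym * W) = -Matrix.trace ((-Ym) * W) := by
        simp
      rw [this]
      linarith [trace_psd_mul_nonneg hYmPSD hW]
    exact (frob_proj hcross).1
  · intro W hW heq
    have hcross : 0 ≤ Matrix.trace ((X - Yp)ᵀ * (Yp - W)) := by
      rw [hXYp, hYmT, Matrix.mul_sub, Matrix.trace_sub, hYmYp, Matrix.trace_zero]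
      have : Matrix.trace (Ym * W) = -Matrix.trace ((-Ym) * W) := by
        simp
      rw [this]
      linarith [trace_psd_mul_nonneg hYmPSD hW]
    exact (frob_proj hcross).2 heq
  · intro W hW
    have hcross : 0 ≤ Matrix.trace ((X - Ym)ᵀ * (Ym - W)) := by
      rw [hXYm, hYpT, Matrix.mul_sub, Matrix.trace_sub, hYpYm, Matrix.trace_zero]
      have : -Matrix.trace (Yp * W) = Matrix.trace (Yp * (-W)) := by
        simp
      rw [zero_sub, this]
      exact trace_psd_mul_nonneg hYpPSD hW
    exact (frob_proj hcross).1
  · intro W hW heq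
    have hcross : 0 ≤ Matrix.trace ((X - Ym)ᵀ * (Ym - W)) := by
      rw [hXYm, hYpT, Matrix.mul_sub, Matrix.trace_sub, hYpYm, Matrix.trace_zero]
      have : -Matrix.trace (Yp * W) = Matrix.trace (Yp * (-W)) := by
        simp
      rw [zero_sub, this]
      exact trace_psd_mul_nonneg hYpPSD hW
    exact (frob_proj hcross).2 heq
  · unfold minner
    rw [hYpT, hYpYm, Matrix.trace_zero]

end Stmt15
end
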